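/- In the field ℚ(t) of rational functions, the following 3×3 matrix identity holds: (1/((1-t⁴)(1-t⁶))) · [[1, t²+t⁴, t⁶], [t²+t⁴, 1+t²+t⁴+t⁶, t²+t⁴], [t⁶, t²+t⁴, 1]] = U · D · Uᵀ, where U = [[1, t², t⁶], [0, 1, t²+t⁴], [0, 0, 1]] and D = diag(1, 1/(1-t²), 1/((1-t⁴)(1-t⁶))). -/

import Mathlib

/-!
Clearing the denominators turns each entry of the factorization into a polynomial identity in `t`,
so it holds in every field in which `(1 - t ^ 4) * (1 - t ^ 6)` is invertible; in `ℚ(t)` this is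
the case for `t = X` because `1 - X ^ n` is a nonzero polynomial.
-/

open Matrix

theorem RatFunc.one_sub_X_pow_ne_zero {K : Type*} [Field K] {n : ℕ} (hn : n ≠ 0) :
    (1 - RatFunc.X ^ n : RatFunc K) ≠ 0 := by
  have hpoly : (1 - Polynomial.X ^ n : Polynomial K) ≠ 0 := by
    rw [← neg_sub, neg_ne_zero, ← map_one Polynomial.C]
    exact Polynomial.X_pow_sub_C_ne_zero (Nat.pos_of_ne_zero hn) 1
  simpa [RatFunc.algebraMap_X] using RatFunc.algebraMap_ne_zero hpoly

theorem cartan_eq_ldlt {K : Type*} [Field K] (t : K)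
    (h : (1 - t ^ 4) * (1 - t ^ 6) ≠ 0) :
    (1 / ((1 - t ^ 4) * (1 - t ^ 6))) •
      (!![1, t ^ 2 + t ^ 4, t ^ 6;
          t ^ 2 + t ^ 4, 1 + t ^ 2 + t ^ 4 + t ^ 6, t ^ 2 + t ^ 4;
          t ^ 6, t ^ 2 + t ^ 4, 1] : Matrix (Fin 3) (Fin 3) K) =
    !![1, t ^ 2, t ^ 6; 0, 1, t ^ 2 + t ^ 4; 0, 0, 1] *
      diagonal ![1, 1 / (1 - t ^ 2), 1 / ((1 - t ^ 4) * (1 - t ^ 6))] *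
      (!![1, t ^ 2, t ^ 6; 0, 1, t ^ 2 + t ^ 4; 0, 0, 1] : Matrix (Fin 3) (Fin 3) K)ᵀ := by
  obtain ⟨h4, h6⟩ := mul_ne_zero_iff.mp h
  have h2 : 1 - t ^ 2 ≠ 0 := by
    intro h2
    exact h4 (by linear_combination (1 + t ^ 2) * h2)
  ext i j
  fin_cases i <;> fin_cases j <;>
    simp only [diagonal_vec3, Matrix.smul_apply, mul_apply, transpose_apply, Fin.sum_univ_three,
      of_apply, Fin.reduceFinMk, cons_val, smul_eq_mul] <;>
    field_simp <;> ring

/-- the Cartan matrix factorization `[P:L] = U · D · Uᵀ` for the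
geometric extension algebra attached to the nilpotent cone of 𝔰𝔩₃. -/
theorem stmt6 :
    letI t : RatFunc ℚ := RatFunc.X
    (1 / ((1 - t ^ 4) * (1 - t ^ 6))) •
      (!![1, t ^ 2 + t ^ 4, t ^ 6;
          t ^ 2 + t ^ 4, 1 + t ^ 2 + t ^ 4 + t ^ 6, t ^ 2 + t ^ 4;
          t ^ 6, t ^ 2 + t ^ 4, 1] : Matrix (Fin 3) (Fin 3) (RatFunc ℚ)) =
    (!![1, t ^ 2, t ^ 6;
        0, 1, t ^ 2 + t ^ 4;
        0, 0, 1] : Matrix (Fin 3) (Fin 3) (RatFunc ℚ)) *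
      Matrix.diagonal ![1, 1 / (1 - t ^ 2), 1 / ((1 - t ^ 4) * (1 - t ^ 6))] *
      (!![1, t ^ 2, t ^ 6;
          0, 1, t ^ 2 + t ^ 4;
          0, 0, 1] : Matrix (Fin 3) (Fin 3) (RatFunc ℚ))ᵀ :=
  cartan_eq_ldlt _ <| mul_ne_zero
    (RatFunc.one_sub_X_pow_ne_zero (by norm_num)) (RatFunc.one_sub_X_pow_ne_zero (by norm_num))
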